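/- arXiv:2509.14870 — 4 statements merged into one kernel-verified Lean document; each statement's English description precedes it below -/
import Mathlib

section
/- Let σ = (σ₁,…,σₙ) ∈ ℝⁿ with n ≥ 2 and α ∈ [1,2). If σ₁ > sqrt(α/(2(1+α))) · sqrt(σ₂² + ⋯ + σₙ²), then the symmetric n×n matrix M with M₁₁ = (1+α)σ₁, M₁ⱼ = Mⱼ₁ = ασⱼ/2 for 2 ≤ j ≤ n, Mⱼⱼ = σ₁ for 2 ≤ j ≤ n, and all other entries zero, is positive definite. -/
open Matrix

/-- The symmetric matrix arising in the monotonicity formula for `∂_{x₁}|∇|^α` is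
positive definite under the cone condition on `σ`. -/
theorem monotonicity_matrix_posDef (n : ℕ) [NeZero n] (hn : 2 ≤ n) (α : ℝ)
    (hα1 : 1 ≤ α) (hα2 : α < 2) (σ : Fin n → ℝ)
    (hσ : Real.sqrt (α / (2 * (1 + α))) *
        Real.sqrt (∑ j ∈ Finset.univ \ {(0 : Fin n)}, σ j ^ 2) < σ 0) :
    Matrix.PosDef (Matrix.of (fun i j : Fin n =>
      if i = 0 ∧ j = 0 then (1 + α) * σ 0
      else if i = 0 then α * σ j / 2
      else if j = 0 then α * σ i / 2
      else if i = j then σ 0 else 0)) := by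
  set s : Finset (Fin n) := Finset.univ \ {(0 : Fin n)} with hs
  set T : ℝ := ∑ j ∈ s, σ j ^ 2 with hTdef
  have hTnn : 0 ≤ T := Finset.sum_nonneg fun i _ => sq_nonneg _
  have hσ0 : 0 < σ 0 := lt_of_le_of_lt (by positivity) hσ
  have hkey : α * T < 2 * (1 + α) * σ 0 ^ 2 := by
    have h2 : (Real.sqrt (α / (2 * (1 + α))) * Real.sqrt T) ^ 2 < σ 0 ^ 2 :=
      pow_lt_pow_left₀ hσ (by positivity) (by norm_num)
    rw [mul_pow, Real.sq_sqrt (by positivity), Real.sq_sqrt hTnn] at h2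
    have hpos : (0:ℝ) < 2 * (1 + α) := by linarith
    rw [div_mul_eq_mul_div, div_lt_iff₀ hpos] at h2
    nlinarith
  rw [Matrix.posDef_iff_dotProduct_mulVec]
  constructor
  · ext i j
    simp only [Matrix.conjTranspose_apply, Matrix.of_apply, RCLike.star_def, starRingEnd_apply,
      star_trivial]
    by_cases hi : i = 0 <;> by_cases hj : j = 0 <;>
      simp [hi, hj, eq_comm] <;> aesop
  · intro x hx
    -- compute the quadratic form
    have h0s : (0 : Fin n) ∉ s := by simp [hs]
    have hsplit : ∀ f : Fin n → ℝ, ∑ i, f i = f 0 + ∑ i ∈ s, f i := by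
      intro f
      rw [hs, Finset.sdiff_singleton_eq_erase,
        ← Finset.add_sum_erase _ f (Finset.mem_univ 0)]
    have hQ : dotProduct (star x) ((Matrix.of (fun i j : Fin n =>
        if i = 0 ∧ j = 0 then (1 + α) * σ 0
        else if i = 0 then α * σ j / 2
        else if j = 0 then α * σ i / 2
        else if i = j then σ 0 else 0)) *ᵥ x)
        = (1 + α) * σ 0 * x 0 ^ 2 + α * x 0 * (∑ j ∈ s, σ j * x j)
          + σ 0 * ∑ j ∈ s, x j ^ 2 := by
      simp only [dotProduct, Matrix.mulVec, star_trivial, Pi.star_apply, Matrix.of_apply]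
      have hrow0 : ∀ i, (∑ j, (if i = 0 ∧ j = 0 then (1 + α) * σ 0
          else if i = 0 then α * σ j / 2
          else if j = 0 then α * σ i / 2
          else if i = j then σ 0 else 0) * x j)
          = (if i = 0 then (1 + α) * σ 0 * x 0 + ∑ j ∈ s, α * σ j / 2 * x j
             else α * σ i / 2 * x 0 + σ 0 * x i) := by
        intro i
        rw [hsplit]
        by_cases hi : i = 0
        · subst hi
          simp only [if_pos rfl, true_and, if_pos]
          congr 1
          refine Finset.sum_congr rfl fun j hj => ?_
          have hj0 : j ≠ 0 := by
            simp [hs, Finset.mem_sdiff] at hj; exact hj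
          simp [hj0]
        · have hi_mem : i ∈ s := by simp [hs, hi]
          have h2 : ∑ j ∈ s, (if i = 0 ∧ j = 0 then (1 + α) * σ 0
              else if i = 0 then α * σ j / 2
              else if j = 0 then α * σ i / 2
              else if i = j then σ 0 else 0) * x j = σ 0 * x i := by
            rw [Finset.sum_eq_single i]
            · simp [hi]
            · intro b hb hbi
              have hb0 : b ≠ 0 := by simp [hs] at hb; exact hb
              simp [hi, hb0, Ne.symm hbi]
            · intro h; exact absurd hi_mem h
          rw [h2]
          simp [hi]
      simp only [hrow0]
      rw [hsplit fun i => x i * _]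
      rw [if_pos rfl]
      have : ∑ i ∈ s, x i * (if i = 0 then (1 + α) * σ 0 * x 0 + ∑ j ∈ s, α * σ j / 2 * x j
          else α * σ i / 2 * x 0 + σ 0 * x i)
          = ∑ i ∈ s, x i * (α * σ i / 2 * x 0 + σ 0 * x i) := by
        refine Finset.sum_congr rfl fun i hi => ?_
        have hi0 : i ≠ 0 := by simp [hs] at hi; exact hi
        simp [hi0]
      rw [this, Finset.mul_sum, Finset.mul_sum, mul_add, Finset.mul_sum]
      have e2 : ∑ i ∈ s, x i * (α * σ i / 2 * x 0 + σ 0 * x i)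
          = ∑ i ∈ s, (x i * (α * σ i / 2 * x 0)) + ∑ i ∈ s, σ 0 * x i ^ 2 := by
        rw [← Finset.sum_add_distrib]
        exact Finset.sum_congr rfl fun i _ => by ring
      rw [e2]
      have e3 : ∑ j ∈ s, x 0 * (α * σ j / 2 * x j) + ∑ i ∈ s, (x i * (α * σ i / 2 * x 0))
          = ∑ i ∈ s, α * x 0 * (σ i * x i) := by
        rw [← Finset.sum_add_distrib]
        exact Finset.sum_congr rfl fun i _ => by ring
      linear_combination e3
    rw [hQ]
    set S : ℝ := ∑ j ∈ s, σ j * x j with hSdef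
    set R2 : ℝ := ∑ j ∈ s, x j ^ 2 with hR2def
    have hR2nn : 0 ≤ R2 := Finset.sum_nonneg fun i _ => sq_nonneg _
    have hCS : S ^ 2 ≤ T * R2 := Finset.sum_mul_sq_le_sq_mul_sq s σ x
    by_cases hR2 : 0 < R2
    · have hα0 : (0:ℝ) < α := lt_of_lt_of_le one_pos hα1
      have hD : α ^ 2 * S ^ 2 < 4 * (1 + α) * σ 0 ^ 2 * R2 := by
        nlinarith [mul_le_mul_of_nonneg_left hCS (sq_nonneg α),
          mul_lt_mul_of_pos_right hkey (mul_pos hα0 hR2),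
          mul_nonneg (mul_nonneg (by linarith : (0:ℝ) ≤ 1 + α) (sq_nonneg (σ 0))) hR2nn]
      nlinarith [sq_nonneg (2 * (1 + α) * σ 0 * x 0 + α * S), hD,
        (by positivity : (0:ℝ) < 4 * (1 + α) * σ 0)]
    · have hR20 : R2 = 0 := le_antisymm (not_lt.mp hR2) hR2nn
      have hS : S = 0 := by nlinarith [sq_nonneg S]
      have hzero : ∀ j ∈ s, x j = 0 := by
        intro j hj
        have := (Finset.sum_eq_zero_iff_of_nonneg (fun j _ => sq_nonneg (x j))).mp
          (hR2def ▸ hR20.symm).symm j hj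
        exact pow_eq_zero_iff two_ne_zero |>.mp this
      have ha : x 0 ≠ 0 := by
        intro h0
        apply hx
        funext i
        by_cases hi : i = 0
        · simpa [hi] using h0
        · exact hzero i (by simp [hs, hi])
      have hx0 : 0 < x 0 ^ 2 := by positivity
      rw [hS, hR20]
      nlinarith [mul_pos hσ0 hx0]
end

section
/- Let γ > 1/2 and ω ∈ ℝ. If x, y ∈ ℝ satisfy |x − y| ≤ (1/2)(⟨x+ω⟩ + ⟨y+ω⟩), then |∫_x^y (⟨s+ω⟩^{-2γ} − ⟨x+ω⟩^{-γ}⟨y+ω⟩^{-γ}) ds| ≤ C |x−y|² / (⟨x+ω⟩ + ⟨y+ω⟩)^{2γ+1}, for a constant C depending only on γ. -/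
/-- The Japanese bracket `⟨t⟩ = (1 + t²)^{1/2}`. -/
noncomputable def jb (t : ℝ) : ℝ := Real.sqrt (1 + t ^ 2)

lemma jb_pos (t : ℝ) : 0 < jb t := Real.sqrt_pos.2 (by positivity)

lemma jb_sq (t : ℝ) : jb t ^ 2 = 1 + t ^ 2 := Real.sq_sqrt (by positivity)

lemma one_le_jb (t : ℝ) : 1 ≤ jb t := by
  have h := jb_sq t
  nlinarith [Real.sqrt_nonneg (1 + t ^ 2), sq_nonneg t, sq_nonneg (jb t - 1), jb_pos t]

lemma abs_le_jb (t : ℝ) : |t| ≤ jb t := by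
  rw [jb, ← Real.sqrt_sq_eq_abs]
  exact Real.sqrt_le_sqrt (by nlinarith)

lemma jb_lip (a b : ℝ) : |jb a - jb b| ≤ |a - b| := by
  have h1 := jb_sq a
  have h2 := jb_sq b
  have h3 := abs_le_jb a
  have h4 := abs_le_jb b
  have h5 := abs_nonneg a
  have h6 := abs_nonneg b
  have hp : (jb a - jb b) * (jb a + jb b) = (a - b) * (a + b) := by nlinarith
  have habs : |(a - b) * (a + b)| ≤ |a - b| * (jb a + jb b) := by
    rw [abs_mul]
    exact mul_le_mul_of_nonneg_left ((abs_add_le a b).trans (by nlinarith)) (abs_nonneg _)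
  have hsum : (0:ℝ) < jb a + jb b := by nlinarith [jb_pos a, jb_pos b]
  rw [abs_le]
  constructor <;> nlinarith [neg_abs_le ((a-b)*(a+b)), le_abs_self ((a-b)*(a+b))]

lemma jb_rpow (t p : ℝ) : jb t ^ p = (1 + t ^ 2) ^ (p / 2) := by
  rw [jb, Real.sqrt_eq_rpow, ← Real.rpow_mul (by positivity), show 1 / 2 * p = p / 2 by ring]

lemma uIcc_abs {s x y : ℝ} (hs : s ∈ Set.uIcc x y) : |s - x| + |s - y| = |x - y| := by
  rcases le_total x y with h | h
  · rw [Set.uIcc_of_le h] at hs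
    obtain ⟨h1, h2⟩ := hs
    rw [abs_of_nonneg (by linarith), abs_of_nonpos (by linarith), abs_of_nonpos (by linarith)]
    ring
  · rw [Set.uIcc_of_ge h] at hs
    obtain ⟨h1, h2⟩ := hs
    rw [abs_of_nonpos (by linarith), abs_of_nonneg (by linarith), abs_of_nonneg (by linarith)]
    ring

lemma mvt_g {γ : ℝ} (hγ0 : 0 < γ) (ω K : ℝ) (hK : 0 < K) {a b : ℝ}
    (hseg : ∀ t ∈ Set.uIcc a b, K ≤ jb (t + ω)) :
    |jb (b + ω) ^ (-γ) - jb (a + ω) ^ (-γ)| ≤ γ * K ^ (-(γ + 1)) * |b - a| := by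
  have hderiv : ∀ t ∈ Set.uIcc a b, HasDerivWithinAt
      (fun t : ℝ => (1 + (t + ω) ^ 2) ^ (-(γ / 2)))
      ((2 * (t + ω)) * (-(γ / 2)) * (1 + (t + ω) ^ 2) ^ (-(γ / 2) - 1)) (Set.uIcc a b) t := by
    intro t ht
    have h1 : HasDerivAt (fun t : ℝ => 1 + (t + ω) ^ 2) (2 * (t + ω)) t := by
      simpa using (((hasDerivAt_id t).add_const ω).pow 2).const_add 1
    exact (h1.rpow_const (Or.inl (by positivity))).hasDerivWithinAt
  have hbound : ∀ t ∈ Set.uIcc a b,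
      ‖(2 * (t + ω)) * (-(γ / 2)) * (1 + (t + ω) ^ 2) ^ (-(γ / 2) - 1)‖
        ≤ γ * K ^ (-(γ + 1)) := by
    intro t ht
    have hu : (0:ℝ) < 1 + (t + ω) ^ 2 := by positivity
    have h2 : |t + ω| ≤ (1 + (t + ω) ^ 2) ^ ((1:ℝ)/2) := by
      rw [← Real.sqrt_eq_rpow]; exact abs_le_jb (t + ω)
    have h5 : (0:ℝ) < (1 + (t + ω) ^ 2) ^ (-(γ / 2) - 1) := Real.rpow_pos_of_pos hu _
    have h3 : (1 + (t + ω) ^ 2) ^ ((1:ℝ)/2) * (1 + (t + ω) ^ 2) ^ (-(γ / 2) - 1)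
        = jb (t + ω) ^ (-(γ + 1)) := by
      rw [← Real.rpow_add hu, jb_rpow, show (1:ℝ)/2 + (-(γ / 2) - 1) = -(γ+1)/2 by ring]
    have h4 : jb (t + ω) ^ (-(γ + 1)) ≤ K ^ (-(γ + 1)) :=
      Real.rpow_le_rpow_of_nonpos hK (hseg t ht) (by linarith)
    calc ‖(2 * (t + ω)) * (-(γ / 2)) * (1 + (t + ω) ^ 2) ^ (-(γ / 2) - 1)‖
        = |t + ω| * γ * (1 + (t + ω) ^ 2) ^ (-(γ / 2) - 1) := by
          rw [Real.norm_eq_abs, abs_mul, abs_mul, abs_of_pos h5, abs_neg,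
            abs_of_pos (half_pos hγ0), abs_mul, abs_of_pos (by norm_num : (0:ℝ) < 2)]
          ring
      _ ≤ (1 + (t + ω) ^ 2) ^ ((1:ℝ)/2) * γ * (1 + (t + ω) ^ 2) ^ (-(γ / 2) - 1) :=
          mul_le_mul_of_nonneg_right (mul_le_mul_of_nonneg_right h2 hγ0.le) h5.le
      _ = γ * (jb (t + ω) ^ (-(γ + 1))) := by rw [← h3]; ring
      _ ≤ γ * K ^ (-(γ + 1)) := mul_le_mul_of_nonneg_left h4 hγ0.le
  have key := (convex_uIcc a b).norm_image_sub_le_of_norm_hasDerivWithin_le hderiv hbound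
    Set.left_mem_uIcc Set.right_mem_uIcc
  have e : ∀ t : ℝ, jb (t + ω) ^ (-γ) = (1 + (t + ω) ^ 2) ^ (-(γ / 2)) := fun t => by
    rw [jb_rpow, show -γ/2 = -(γ/2) by ring]
  rw [e a, e b]
  calc |(1 + (b + ω) ^ 2) ^ (-(γ / 2)) - (1 + (a + ω) ^ 2) ^ (-(γ / 2))|
      ≤ γ * K ^ (-(γ + 1)) * ‖b - a‖ := key
    _ = γ * K ^ (-(γ + 1)) * |b - a| := by rw [Real.norm_eq_abs]


/-- Near-diagonal remainder estimate for the weight decomposition. -/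
theorem remainder_near_diagonal (γ : ℝ) (hγ : 1 / 2 < γ) :
    ∃ C > 0, ∀ (ω x y : ℝ),
      |x - y| ≤ (1 / 2) * (jb (x + ω) + jb (y + ω)) →
      |∫ s in x..y,
          (jb (s + ω) ^ (-(2 * γ)) - jb (x + ω) ^ (-γ) * jb (y + ω) ^ (-γ))| ≤
        C * |x - y| ^ 2 / (jb (x + ω) + jb (y + ω)) ^ (2 * γ + 1) := by
  have hγ0 : 0 < γ := by linarith
  refine ⟨2 * γ * 4 ^ (2 * γ + 1),
    mul_pos (by linarith) (Real.rpow_pos_of_pos (by norm_num) _), ?_⟩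
  intro ω x y hxy
  set X := jb (x + ω) with hX
  set Y := jb (y + ω) with hY
  have hX1 : 1 ≤ X := one_le_jb _
  have hY1 : 1 ≤ Y := one_le_jb _
  set K := (X + Y) / 4 with hKdef
  have hK : 0 < K := by rw [hKdef]; linarith
  have hseg : ∀ s ∈ Set.uIcc x y, K ≤ jb (s + ω) := by
    intro s hs
    have h1 := jb_lip (s + ω) (x + ω)
    have h2 := jb_lip (s + ω) (y + ω)
    rw [show s + ω - (x + ω) = s - x by ring] at h1
    rw [show s + ω - (y + ω) = s - y by ring] at h2
    have hsum := uIcc_abs hs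
    have a1 := (abs_le.mp h1).1
    have a2 := (abs_le.mp h2).1
    rw [hKdef]; linarith
  have hKX : K ≤ X := hseg x Set.left_mem_uIcc
  have hKY : K ≤ Y := hseg y Set.right_mem_uIcc
  have hptwise : ∀ s ∈ Set.uIoc x y,
      ‖jb (s + ω) ^ (-(2 * γ)) - X ^ (-γ) * Y ^ (-γ)‖
        ≤ 2 * γ * K ^ (-(2 * γ + 1)) * |x - y| := by
    intro s hs
    have hs' : s ∈ Set.uIcc x y := Set.uIoc_subset_uIcc hs
    have hsum := uIcc_abs hs'
    have habs1 : |s - x| ≤ |x - y| := by have := abs_nonneg (s - y); linarith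
    have habs2 : |s - y| ≤ |x - y| := by have := abs_nonneg (s - x); linarith
    have m1 : |jb (s + ω) ^ (-γ) - X ^ (-γ)| ≤ γ * K ^ (-(γ + 1)) * |s - x| :=
      mvt_g hγ0 ω K hK (fun t ht => hseg t (Set.uIcc_subset_uIcc Set.left_mem_uIcc hs' ht))
    have m2 : |jb (s + ω) ^ (-γ) - Y ^ (-γ)| ≤ γ * K ^ (-(γ + 1)) * |s - y| :=
      mvt_g hγ0 ω K hK (fun t ht => hseg t (Set.uIcc_subset_uIcc Set.right_mem_uIcc hs' ht))
    have hD : (0:ℝ) ≤ γ * K ^ (-(γ + 1)) := by positivity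
    have m1' : |jb (s + ω) ^ (-γ) - X ^ (-γ)| ≤ γ * K ^ (-(γ + 1)) * |x - y| :=
      m1.trans (mul_le_mul_of_nonneg_left habs1 hD)
    have m2' : |jb (s + ω) ^ (-γ) - Y ^ (-γ)| ≤ γ * K ^ (-(γ + 1)) * |x - y| :=
      m2.trans (mul_le_mul_of_nonneg_left habs2 hD)
    have t1 : |jb (s + ω) ^ (-γ)| ≤ K ^ (-γ) := by
      rw [abs_of_pos (Real.rpow_pos_of_pos (jb_pos _) _)]
      exact Real.rpow_le_rpow_of_nonpos hK (hseg s hs') (by linarith)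
    have t2 : |X ^ (-γ)| ≤ K ^ (-γ) := by
      rw [abs_of_pos (Real.rpow_pos_of_pos (by positivity : (0:ℝ) < X) _)]
      exact Real.rpow_le_rpow_of_nonpos hK hKX (by linarith)
    have hsq : jb (s + ω) ^ (-(2 * γ)) = jb (s + ω) ^ (-γ) * jb (s + ω) ^ (-γ) := by
      rw [← Real.rpow_add (jb_pos _)]; congr 1; ring
    have hdec : jb (s + ω) ^ (-γ) * jb (s + ω) ^ (-γ) - X ^ (-γ) * Y ^ (-γ)
        = jb (s + ω) ^ (-γ) * (jb (s + ω) ^ (-γ) - X ^ (-γ))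
          + X ^ (-γ) * (jb (s + ω) ^ (-γ) - Y ^ (-γ)) := by ring
    have hKpos : (0:ℝ) ≤ K ^ (-γ) := (Real.rpow_pos_of_pos hK _).le
    have hadd : K ^ (-γ) * K ^ (-(γ + 1)) = K ^ (-(2 * γ + 1)) := by
      rw [← Real.rpow_add hK]; congr 1; ring
    rw [Real.norm_eq_abs, hsq, hdec]
    calc |jb (s + ω) ^ (-γ) * (jb (s + ω) ^ (-γ) - X ^ (-γ))
          + X ^ (-γ) * (jb (s + ω) ^ (-γ) - Y ^ (-γ))|
        ≤ |jb (s + ω) ^ (-γ)| * |jb (s + ω) ^ (-γ) - X ^ (-γ)|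
          + |X ^ (-γ)| * |jb (s + ω) ^ (-γ) - Y ^ (-γ)| := by
          rw [← abs_mul, ← abs_mul]; exact abs_add_le _ _
      _ ≤ K ^ (-γ) * (γ * K ^ (-(γ + 1)) * |x - y|)
          + K ^ (-γ) * (γ * K ^ (-(γ + 1)) * |x - y|) :=
          add_le_add (mul_le_mul t1 m1' (abs_nonneg _) hKpos)
            (mul_le_mul t2 m2' (abs_nonneg _) hKpos)
      _ = 2 * γ * K ^ (-(2 * γ + 1)) * |x - y| := by rw [← hadd]; ring
  have hint := intervalIntegral.norm_integral_le_of_norm_le_const hptwise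
  rw [Real.norm_eq_abs] at hint
  have hKpow : K ^ (-(2 * γ + 1)) = 4 ^ (2 * γ + 1) / (X + Y) ^ (2 * γ + 1) := by
    rw [hKdef, Real.rpow_neg (by linarith), Real.div_rpow (by linarith)
      (by norm_num : (0:ℝ) ≤ 4), inv_div]
  calc |∫ s in x..y, (jb (s + ω) ^ (-(2 * γ)) - X ^ (-γ) * Y ^ (-γ))|
      ≤ 2 * γ * K ^ (-(2 * γ + 1)) * |x - y| * |y - x| := hint
    _ = 2 * γ * 4 ^ (2 * γ + 1) * |x - y| ^ 2 / (X + Y) ^ (2 * γ + 1) := by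
        rw [hKpow, abs_sub_comm y x]; ring
end

section
/- Let g : ℝ² → ℝ satisfy |g(x)| ≤ C⟨x⟩^{-3-l} for some l ≥ 0, and let F(x₁,x₂) = ∫_{-∞}^{x₁} g(z,x₂) dz. Then for any α₁, α₂ > 0 with α₁ + α₂ = 3 + l and α₂ > 1, sup_{x₁∈ℝ} |F(x₁,x₂)| ≤ C' ⟨x₂⟩^{-α₁} for all x₂ ∈ ℝ, with C' depending only on C, α₁, α₂. -/
/-- Transverse decay of the primitive `F(x₁,x₂) = ∫_{-∞}^{x₁} g(z,x₂) dz`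
uniformly in `x₁`. -/
theorem primitive_transverse_decay (C l α₁ α₂ : ℝ) (hC : 0 < C) (hl : 0 ≤ l)
    (hα₁ : 0 < α₁) (hα₂ : 1 < α₂) (hsum : α₁ + α₂ = 3 + l) :
    ∃ C' > 0, ∀ g : ℝ × ℝ → ℝ, Measurable g →
      (∀ p : ℝ × ℝ, |g p| ≤ C * Real.sqrt (1 + ‖p‖ ^ 2) ^ (-(3 + l))) →
      ∀ x₁ x₂ : ℝ,
        |∫ z in Set.Iio x₁, g (z, x₂)| ≤ C' * Real.sqrt (1 + x₂ ^ 2) ^ (-α₁) := by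
  -- integrability of the transverse weight
  have hsqrt : ∀ z : ℝ, Real.sqrt (1 + z ^ 2) ^ (-α₂) = ((1 : ℝ) + ‖z‖ ^ 2) ^ (-α₂ / 2) := by
    intro z
    rw [Real.sqrt_eq_rpow, ← Real.rpow_mul (by positivity), Real.norm_eq_abs, sq_abs]
    ring_nf
  have hI : MeasureTheory.Integrable (fun z : ℝ => Real.sqrt (1 + z ^ 2) ^ (-α₂)) := by
    simp only [hsqrt]
    exact integrable_rpow_neg_one_add_norm_sq (by simpa using hα₂)
  set I : ℝ := ∫ z : ℝ, Real.sqrt (1 + z ^ 2) ^ (-α₂) with hIdef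
  have hInn : 0 ≤ I := MeasureTheory.integral_nonneg fun z => by positivity
  refine ⟨C * (I + 1), by positivity, fun g hgm hgb x₁ x₂ => ?_⟩
  set B : ℝ → ℝ := fun z => (C * Real.sqrt (1 + x₂ ^ 2) ^ (-α₁)) * Real.sqrt (1 + z ^ 2) ^ (-α₂)
    with hBdef
  have hpt : ∀ z : ℝ, |g (z, x₂)| ≤ B z := by
    intro z
    refine (hgb (z, x₂)).trans ?_
    have h1 : (0:ℝ) < Real.sqrt (1 + ‖((z, x₂) : ℝ × ℝ)‖ ^ 2) := by positivity
    have hsplit : Real.sqrt (1 + ‖((z, x₂) : ℝ × ℝ)‖ ^ 2) ^ (-(3 + l))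
        = Real.sqrt (1 + ‖((z, x₂) : ℝ × ℝ)‖ ^ 2) ^ (-α₁)
          * Real.sqrt (1 + ‖((z, x₂) : ℝ × ℝ)‖ ^ 2) ^ (-α₂) := by
      rw [← Real.rpow_add h1]; congr 1; linarith
    rw [hsplit]
    simp only [hBdef]
    rw [mul_assoc]
    have hx2 : Real.sqrt (1 + x₂ ^ 2) ≤ Real.sqrt (1 + ‖((z, x₂) : ℝ × ℝ)‖ ^ 2) := by
      apply Real.sqrt_le_sqrt
      have := norm_snd_le ((z, x₂) : ℝ × ℝ)
      have h2 : x₂ ^ 2 ≤ ‖((z, x₂) : ℝ × ℝ)‖ ^ 2 := by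
        have : |x₂| ≤ ‖((z, x₂) : ℝ × ℝ)‖ := by simpa using this
        nlinarith [abs_nonneg x₂, sq_abs x₂]
      linarith
    have hz : Real.sqrt (1 + z ^ 2) ≤ Real.sqrt (1 + ‖((z, x₂) : ℝ × ℝ)‖ ^ 2) := by
      apply Real.sqrt_le_sqrt
      have := norm_fst_le ((z, x₂) : ℝ × ℝ)
      have h2 : z ^ 2 ≤ ‖((z, x₂) : ℝ × ℝ)‖ ^ 2 := by
        have : |z| ≤ ‖((z, x₂) : ℝ × ℝ)‖ := by simpa using this
        nlinarith [abs_nonneg z, sq_abs z]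
      linarith
    have e1 : Real.sqrt (1 + ‖((z, x₂) : ℝ × ℝ)‖ ^ 2) ^ (-α₁)
        ≤ Real.sqrt (1 + x₂ ^ 2) ^ (-α₁) :=
      Real.rpow_le_rpow_of_nonpos (by positivity) hx2 (by linarith)
    have e2 : Real.sqrt (1 + ‖((z, x₂) : ℝ × ℝ)‖ ^ 2) ^ (-α₂)
        ≤ Real.sqrt (1 + z ^ 2) ^ (-α₂) :=
      Real.rpow_le_rpow_of_nonpos (by positivity) hz (by linarith)
    have hnn1 : (0:ℝ) ≤ Real.sqrt (1 + ‖((z, x₂) : ℝ × ℝ)‖ ^ 2) ^ (-α₁) := by positivity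
    have hnn2 : (0:ℝ) ≤ Real.sqrt (1 + ‖((z, x₂) : ℝ × ℝ)‖ ^ 2) ^ (-α₂) := by positivity
    have hnn3 : (0:ℝ) ≤ Real.sqrt (1 + x₂ ^ 2) ^ (-α₁) := by positivity
    exact mul_le_mul_of_nonneg_left (mul_le_mul e1 e2 hnn2 hnn3) hC.le
  have hBint : MeasureTheory.Integrable B := hI.const_mul _
  have hBnn : ∀ z, 0 ≤ B z := fun z => by
    have := (abs_nonneg (g (z, x₂))).trans (hpt z); exact this
  have hgint : MeasureTheory.Integrable (fun z : ℝ => g (z, x₂)) := by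
    refine hBint.mono' ?_ (Filter.Eventually.of_forall fun z => ?_)
    · exact (hgm.comp (measurable_id.prodMk measurable_const)).aestronglyMeasurable
    · simpa [Real.norm_eq_abs] using hpt z
  calc |∫ z in Set.Iio x₁, g (z, x₂)|
      ≤ ∫ z in Set.Iio x₁, |g (z, x₂)| :=
        by simpa [Real.norm_eq_abs] using
          MeasureTheory.norm_integral_le_integral_norm (fun z => g (z, x₂))
    _ ≤ ∫ z in Set.Iio x₁, B z := by
        refine MeasureTheory.setIntegral_mono_on hgint.abs.integrableOn
          hBint.integrableOn measurableSet_Iio fun z _ => hpt z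
    _ ≤ ∫ z : ℝ, B z :=
        MeasureTheory.setIntegral_le_integral hBint (Filter.Eventually.of_forall hBnn)
    _ = (C * Real.sqrt (1 + x₂ ^ 2) ^ (-α₁)) * I := by
        rw [hBdef, MeasureTheory.integral_const_mul]
    _ ≤ C * (I + 1) * Real.sqrt (1 + x₂ ^ 2) ^ (-α₁) := by
        have h3 : (0:ℝ) ≤ Real.sqrt (1 + x₂ ^ 2) ^ (-α₁) := by positivity
        nlinarith
end

section
/- Let α > 0, n ≥ 1, and χ ∈ C_c^∞(ℝⁿ) be radial with 0 ≤ χ ≤ 1, χ = 1 on the unit ball and χ = 0 outside the ball of radius 2. Define Ω(x) = (2π)^{-n} ∫_{ℝⁿ} e^{ix·ξ} |ξ|^α (iξ₁) χ(ξ) dξ. Then there exists C = C(α,n,χ) such that |Ω(x)| ≤ C ⟨x⟩^{-(n+α+1)} for all x ∈ ℝⁿ. -/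
set_option maxHeartbeats 1000000

open Real MeasureTheory FourierTransform SchwartzMap
open scoped RealInnerProductSpace


lemma aux_toSchwartz {E : Type*} [NormedAddCommGroup E] [InnerProductSpace ℝ E]
    (g : E → ℂ) (hg : ContDiff ℝ ((⊤:ℕ∞) : WithTop ℕ∞) g) (hc : HasCompactSupport g) :
    ∃ G : SchwartzMap E ℂ, ⇑G = g := by
  refine ⟨⟨g, hg, fun k m => ?_⟩, rfl⟩
  have h1 : HasCompactSupport (fun x => ‖x‖ ^ k * ‖iteratedFDeriv ℝ m g x‖) :=
    ((hc.iteratedFDeriv (𝕜 := ℝ) m).norm).mul_left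
  have h2 : Continuous (fun x : E => ‖x‖ ^ k * ‖iteratedFDeriv ℝ m g x‖) :=
    ((continuous_norm.pow k).mul (hg.continuous_iteratedFDeriv (mod_cast le_top)).norm)
  obtain ⟨C, hC⟩ := h1.exists_bound_of_continuous h2
  exact ⟨C, fun x => (Real.le_norm_self _).trans (hC x)⟩


lemma aux_ft_decay {n : ℕ} (G : SchwartzMap (EuclideanSpace ℝ (Fin n)) ℂ) (N : ℕ) :
    ∃ C > 0, ∀ y, ‖𝓕 ⇑G y‖ ≤ C * (1 + ‖y‖) ^ (-(N:ℝ)) := by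
  set F := SchwartzMap.fourierTransformCLM ℂ G with hF
  have hFeq : ⇑F = 𝓕 ⇑G := rfl
  obtain ⟨C0, hC0p, hC0⟩ := F.decay 0 0
  obtain ⟨CN, hCNp, hCN⟩ := F.decay N 0
  refine ⟨2 ^ N * (C0 + CN), by positivity, fun y => ?_⟩
  have hy0 : (0:ℝ) < 1 + ‖y‖ := by positivity
  rw [← hFeq, Real.rpow_neg hy0.le, Real.rpow_natCast, ← div_eq_mul_inv,
    le_div_iff₀ (by positivity)]
  have hb : (1 + ‖y‖) ^ N ≤ 2 ^ N * (1 + ‖y‖ ^ N) := by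
    calc (1 + ‖y‖) ^ N ≤ (2 * max 1 ‖y‖) ^ N := by
          apply pow_le_pow_left₀ hy0.le
          rcases le_total ‖y‖ 1 with h | h
          · rw [max_eq_left h]; linarith
          · rw [max_eq_right h]; linarith
      _ = 2 ^ N * (max 1 ‖y‖) ^ N := by rw [mul_pow]
      _ ≤ 2 ^ N * (1 + ‖y‖ ^ N) := by
          apply mul_le_mul_of_nonneg_left _ (by positivity)
          rcases le_total ‖y‖ 1 with h | h
          · rw [max_eq_left h, one_pow]
            nlinarith [pow_nonneg (norm_nonneg y) N]
          · rw [max_eq_right h]; linarith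
  have h0 := hC0 y
  have hN' := hCN y
  simp only [norm_iteratedFDeriv_zero, pow_zero, one_mul] at h0 hN'
  calc ‖F y‖ * (1 + ‖y‖) ^ N ≤ ‖F y‖ * (2 ^ N * (1 + ‖y‖ ^ N)) :=
        mul_le_mul_of_nonneg_left hb (norm_nonneg _)
    _ = 2 ^ N * (‖F y‖ + ‖y‖ ^ N * ‖F y‖) := by ring
    _ ≤ 2 ^ N * (C0 + CN) := by
        apply mul_le_mul_of_nonneg_left _ (by positivity)
        exact add_le_add h0 hN'


lemma aux_dyadic_sum (s N : ℝ) (hs : 2 ≤ s) (hN : s + 1 ≤ N) (C1 : ℝ) (hC1 : 0 ≤ C1)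
    (t : ℝ) (ht : 0 ≤ t) (J : ℕ) :
    ∑ j ∈ Finset.range J, C1 * ((2:ℝ) ^ j) ^ (-s) * (1 + ((2:ℝ) ^ j)⁻¹ * t) ^ (-N)
      ≤ C1 * ((4:ℝ) ^ (N - s) + 2) * (1 + t) ^ (-s) := by
  have h1t : (0:ℝ) < 1 + t := by linarith
  set b : ℕ → ℝ := fun j => C1 * ((2:ℝ) ^ j) ^ (-s) * (1 + ((2:ℝ) ^ j)⁻¹ * t) ^ (-N) with hb
  have hpow_pos : ∀ j : ℕ, (0:ℝ) < (2:ℝ) ^ j := fun j => pow_pos two_pos j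
  have hc_pos : ∀ j : ℕ, (0:ℝ) < ((2:ℝ) ^ j)⁻¹ := fun j => inv_pos.2 (hpow_pos j)
  have hc_le_one : ∀ j : ℕ, ((2:ℝ) ^ j)⁻¹ ≤ 1 := fun j =>
    inv_le_one_of_one_le₀ (one_le_pow₀ one_le_two)
  have hbase_pos : ∀ j : ℕ, (0:ℝ) < 1 + ((2:ℝ) ^ j)⁻¹ * t := fun j => by
    have := mul_nonneg (hc_pos j).le ht; linarith
  have hb_nonneg : ∀ j, 0 ≤ b j := fun j =>
    mul_nonneg (mul_nonneg hC1 (rpow_nonneg (hpow_pos j).le _)) (rpow_nonneg (hbase_pos j).le _)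
  set r : ℝ := (2:ℝ) ^ (-s) with hr
  have hr_pos : 0 < r := rpow_pos_of_pos two_pos _
  have hr_half : r ≤ 1/2 := by
    have : (2:ℝ) ^ (-s) ≤ (2:ℝ) ^ (-1:ℝ) :=
      rpow_le_rpow_of_exponent_le one_le_two (by linarith)
    rwa [rpow_neg_one, ← one_div] at this
  have hr_lt1 : r < 1 := lt_of_le_of_lt hr_half (by norm_num)
  have hpow_rpow : ∀ j : ℕ, ((2:ℝ) ^ j) ^ (-s) = r ^ j := fun j => by
    rw [hr, ← Real.rpow_natCast ((2:ℝ) ^ (-s)) j, ← Real.rpow_mul (by norm_num),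
      ← Real.rpow_natCast (2:ℝ) j, ← Real.rpow_mul (by norm_num), mul_comm]
  have hb_le : ∀ j, b j ≤ C1 * r ^ j := fun j => by
    rw [hb]
    simp only
    rw [hpow_rpow j]
    have h1 : (1 + ((2:ℝ) ^ j)⁻¹ * t) ^ (-N) ≤ 1 :=
      rpow_le_one_of_one_le_of_nonpos
        (by have := mul_nonneg (hc_pos j).le ht; linarith) (by linarith)
    calc C1 * r ^ j * (1 + ((2:ℝ) ^ j)⁻¹ * t) ^ (-N) ≤ C1 * r ^ j * 1 :=
          mul_le_mul_of_nonneg_left h1 (mul_nonneg hC1 (pow_nonneg hr_pos.le j))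
      _ = C1 * r ^ j := mul_one _
  have hsum_geom : Summable fun j : ℕ => C1 * r ^ j :=
    (summable_geometric_of_lt_one hr_pos.le hr_lt1).mul_left C1
  have hsum : Summable b := Summable.of_nonneg_of_le hb_nonneg hb_le hsum_geom
  have hstep1 : ∑ j ∈ Finset.range J, b j ≤ ∑' j, b j := Summable.sum_le_tsum _ (fun j _ => hb_nonneg j) hsum
  -- split point
  set j₀ : ℕ := ⌈Real.logb 2 (1 + t)⌉₊ with hj₀
  have hlogb0 : 0 ≤ Real.logb 2 (1 + t) := Real.logb_nonneg one_lt_two (by linarith)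
  have hup : (1 + t) ≤ (2:ℝ) ^ j₀ := by
    have h := rpow_le_rpow_of_exponent_le one_le_two (Nat.le_ceil (Real.logb 2 (1 + t)))
    rwa [Real.rpow_logb two_pos (by norm_num) h1t, Real.rpow_natCast] at h
  have hdown : (2:ℝ) ^ j₀ ≤ 2 * (1 + t) := by
    have hceil : (j₀ : ℝ) ≤ Real.logb 2 (1 + t) + 1 := (Nat.ceil_lt_add_one hlogb0).le
    have h := rpow_le_rpow_of_exponent_le one_le_two hceil
    rwa [Real.rpow_natCast, Real.rpow_add two_pos, Real.rpow_logb two_pos (by norm_num) h1t,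
      Real.rpow_one, mul_comm] at h
  have hsplit := Summable.sum_add_tsum_nat_add (f := b) (j₀ + 1) hsum
  -- Part A
  set ρ : ℝ := (2:ℝ) ^ (N - s) with hρ
  have hNs1 : (1:ℝ) ≤ N - s := by linarith
  have hρ2 : (2:ℝ) ≤ ρ := by
    have := rpow_le_rpow_of_exponent_le one_le_two hNs1
    rwa [Real.rpow_one] at this
  have hρpow : ∀ j : ℕ, ((2:ℝ) ^ j) ^ (N - s) = ρ ^ j := fun j => by
    rw [hρ, ← Real.rpow_natCast ((2:ℝ) ^ (N - s)) j, ← Real.rpow_mul (by norm_num),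
      ← Real.rpow_natCast (2:ℝ) j, ← Real.rpow_mul (by norm_num), mul_comm]
  have hpartA_term : ∀ j : ℕ, b j ≤ C1 * (1 + t) ^ (-N) * ρ ^ j := fun j => by
    have key : (1 + ((2:ℝ) ^ j)⁻¹ * t) ^ (-N) ≤ ((2:ℝ) ^ j) ^ N * (1 + t) ^ (-N) := by
      have hle : ((2:ℝ) ^ j)⁻¹ * (1 + t) ≤ 1 + ((2:ℝ) ^ j)⁻¹ * t := by
        have := hc_le_one j
        have h2 := (hc_pos j).le
        nlinarith
      have h3 : (0:ℝ) < ((2:ℝ) ^ j)⁻¹ * (1 + t) := mul_pos (hc_pos j) h1t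
      have := rpow_le_rpow_of_nonpos h3 hle (by linarith : -N ≤ 0)
      calc (1 + ((2:ℝ) ^ j)⁻¹ * t) ^ (-N) ≤ (((2:ℝ) ^ j)⁻¹ * (1 + t)) ^ (-N) := this
        _ = (((2:ℝ) ^ j)⁻¹) ^ (-N) * (1 + t) ^ (-N) :=
            Real.mul_rpow (hc_pos j).le h1t.le
        _ = ((2:ℝ) ^ j) ^ N * (1 + t) ^ (-N) := by
            rw [Real.inv_rpow (hpow_pos j).le, ← Real.rpow_neg (hpow_pos j).le, neg_neg]
    calc b j ≤ C1 * ((2:ℝ) ^ j) ^ (-s) * (((2:ℝ) ^ j) ^ N * (1 + t) ^ (-N)) :=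
          mul_le_mul_of_nonneg_left key
            (mul_nonneg hC1 (rpow_nonneg (hpow_pos j).le _))
      _ = C1 * (1 + t) ^ (-N) * (((2:ℝ) ^ j) ^ (-s) * ((2:ℝ) ^ j) ^ N) := by ring
      _ = C1 * (1 + t) ^ (-N) * ρ ^ j := by
          rw [← Real.rpow_add (hpow_pos j), ← hρpow]
          ring_nf
  have hρ1 : (1:ℝ) ≤ ρ ^ (j₀ + 1) := one_le_pow₀ (by linarith)
  have hgeomA : ∑ j ∈ Finset.range (j₀ + 1), ρ ^ j ≤ ρ ^ (j₀ + 1) := by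
    rw [geom_sum_eq (by linarith : ρ ≠ 1)]
    calc (ρ ^ (j₀ + 1) - 1) / (ρ - 1) ≤ (ρ ^ (j₀ + 1) - 1) / 1 := by
          apply div_le_div_of_nonneg_left (by linarith) one_pos (by linarith)
      _ ≤ ρ ^ (j₀ + 1) := by rw [div_one]; linarith
  have hrhoval : ρ ^ (j₀ + 1) ≤ (4 * (1 + t)) ^ (N - s) := by
    rw [← hρpow (j₀ + 1)]
    apply rpow_le_rpow (hpow_pos _).le _ (by linarith : (0:ℝ) ≤ N - s)
    calc (2:ℝ) ^ (j₀ + 1) = 2 * (2:ℝ) ^ j₀ := by ring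
      _ ≤ 2 * (2 * (1 + t)) := by linarith
      _ = 4 * (1 + t) := by ring
  have hpartA : ∑ j ∈ Finset.range (j₀ + 1), b j ≤ C1 * (4:ℝ) ^ (N - s) * (1 + t) ^ (-s) := by
    calc ∑ j ∈ Finset.range (j₀ + 1), b j
        ≤ ∑ j ∈ Finset.range (j₀ + 1), C1 * (1 + t) ^ (-N) * ρ ^ j :=
          Finset.sum_le_sum (fun j _ => hpartA_term j)
      _ = C1 * (1 + t) ^ (-N) * ∑ j ∈ Finset.range (j₀ + 1), ρ ^ j := by
          rw [Finset.mul_sum]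
      _ ≤ C1 * (1 + t) ^ (-N) * ((4 * (1 + t)) ^ (N - s)) := by
          apply mul_le_mul_of_nonneg_left (hgeomA.trans hrhoval)
            (mul_nonneg hC1 (rpow_nonneg h1t.le _))
      _ = C1 * (4:ℝ) ^ (N - s) * (1 + t) ^ (-s) := by
          rw [Real.mul_rpow (by norm_num) h1t.le]
          have h9 : (1 + t) ^ (-N) * (1 + t) ^ (N - s) = (1 + t) ^ (-s) := by
            rw [← Real.rpow_add h1t]; ring_nf
          calc C1 * (1 + t) ^ (-N) * ((4:ℝ) ^ (N - s) * (1 + t) ^ (N - s))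
              = C1 * (4:ℝ) ^ (N - s) * ((1 + t) ^ (-N) * (1 + t) ^ (N - s)) := by ring
            _ = _ := by rw [h9]
  -- Part B
  have hshift : Summable fun i => b (i + (j₀ + 1)) := (summable_nat_add_iff (j₀ + 1)).2 hsum
  have hrk : r ^ (j₀ + 1) ≤ (1 + t) ^ (-s) := by
    have h2k : (1 + t) ≤ (2:ℝ) ^ (j₀ + 1) := by
      calc (1 + t) ≤ (2:ℝ) ^ j₀ := hup
        _ ≤ (2:ℝ) ^ (j₀ + 1) := by
            have := hpow_pos j₀; calc (2:ℝ) ^ j₀ ≤ 2 * 2 ^ j₀ := by linarith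
                                    _ = (2:ℝ) ^ (j₀+1) := by ring
    rw [← hpow_rpow (j₀ + 1)]
    exact rpow_le_rpow_of_nonpos h1t h2k (by linarith)
  have hpartB : ∑' i, b (i + (j₀ + 1)) ≤ 2 * C1 * (1 + t) ^ (-s) := by
    have hterm : ∀ i, b (i + (j₀ + 1)) ≤ C1 * r ^ (j₀ + 1) * r ^ i := fun i => by
      calc b (i + (j₀ + 1)) ≤ C1 * r ^ (i + (j₀ + 1)) := hb_le _
        _ = C1 * r ^ (j₀ + 1) * r ^ i := by rw [pow_add]; ring
    have hsum2 : Summable fun i : ℕ => C1 * r ^ (j₀ + 1) * r ^ i :=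
      (summable_geometric_of_lt_one hr_pos.le hr_lt1).mul_left _
    calc ∑' i, b (i + (j₀ + 1)) ≤ ∑' i : ℕ, C1 * r ^ (j₀ + 1) * r ^ i :=
          Summable.tsum_le_tsum hterm hshift hsum2
      _ = C1 * r ^ (j₀ + 1) * (1 - r)⁻¹ := by
          rw [tsum_mul_left, tsum_geometric_of_lt_one hr_pos.le hr_lt1]
      _ ≤ C1 * (1 + t) ^ (-s) * 2 := by
          apply mul_le_mul
          · exact mul_le_mul_of_nonneg_left hrk hC1
          · rw [inv_le_comm₀ (by linarith) two_pos]; linarith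
          · exact inv_nonneg.2 (by linarith)
          · exact mul_nonneg hC1 (rpow_nonneg h1t.le _)
      _ = 2 * C1 * (1 + t) ^ (-s) := by ring
  calc ∑ j ∈ Finset.range J, b j ≤ ∑' j, b j := hstep1
    _ = ∑ j ∈ Finset.range (j₀ + 1), b j + ∑' i, b (i + (j₀ + 1)) := hsplit.symm
    _ ≤ C1 * (4:ℝ) ^ (N - s) * (1 + t) ^ (-s) + 2 * C1 * (1 + t) ^ (-s) :=
        add_le_add hpartA hpartB
    _ = C1 * ((4:ℝ) ^ (N - s) + 2) * (1 + t) ^ (-s) := by ring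


/-- Decay of the kernel `Ω` of the low-frequency part `∂_{x₁}|∇|^α χ(D)`. -/
theorem low_frequency_kernel_decay (n : ℕ) [NeZero n] (hn : 1 ≤ n) (α : ℝ)
    (hα : 0 < α) (χ : EuclideanSpace ℝ (Fin n) → ℝ)
    (hχs : ContDiff ℝ (⊤ : ℕ∞) χ) (hχc : HasCompactSupport χ)
    (hrad : ∀ ξ η, ‖ξ‖ = ‖η‖ → χ ξ = χ η)
    (h01 : ∀ ξ, 0 ≤ χ ξ ∧ χ ξ ≤ 1)
    (hone : ∀ ξ, ‖ξ‖ ≤ 1 → χ ξ = 1) (hzero : ∀ ξ, 2 ≤ ‖ξ‖ → χ ξ = 0) :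
    ∃ C > 0, ∀ x : EuclideanSpace ℝ (Fin n),
      ‖(((2 * π) ^ (-(n : ℝ)) : ℝ) : ℂ) *
          ∫ ξ : EuclideanSpace ℝ (Fin n),
            Complex.exp (Complex.I * ((inner ℝ x ξ : ℝ) : ℂ)) *
              ((‖ξ‖ ^ α : ℝ) : ℂ) * (Complex.I * ((ξ 0 : ℝ) : ℂ)) * ((χ ξ : ℝ) : ℂ)‖ ≤
        C * Real.sqrt (1 + ‖x‖ ^ 2) ^ (-((n : ℝ) + α + 1)) := by
  have hχs' : ContDiff ℝ ((⊤:ℕ∞) : WithTop ℕ∞) χ := hχs.of_le (by simp)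
  set sφ : EuclideanSpace ℝ (Fin n) → ℂ :=
    fun ξ => ((‖ξ‖ ^ α : ℝ) : ℂ) * (Complex.I * ((ξ 0 : ℝ) : ℂ)) with hsφ
  set u : EuclideanSpace ℝ (Fin n) → ℝ := fun ξ => χ ξ - χ ((2:ℝ) • ξ) with hu
  set g : EuclideanSpace ℝ (Fin n) → ℂ := fun ξ => sφ ξ * ((u ξ : ℝ) : ℂ) with hgdef
  -- u vanishes on ball of radius 1/2
  have hu_zero : ∀ ξ : EuclideanSpace ℝ (Fin n), ‖ξ‖ < 1/2 → u ξ = 0 := by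
    intro ξ hξ
    have h1 : χ ξ = 1 := hone ξ (by linarith)
    have h2 : χ ((2:ℝ) • ξ) = 1 := by
      apply hone
      rw [norm_smul]
      simp only [Real.norm_ofNat]
      linarith
    simp [hu, h1, h2]
  -- smoothness of g
  have hproj : ContDiff ℝ ((⊤:ℕ∞) : WithTop ℕ∞)
      (fun ξ : EuclideanSpace ℝ (Fin n) => ξ 0) :=
    (EuclideanSpace.proj (𝕜 := ℝ) (0 : Fin n)).contDiff
  have hg_smooth : ContDiff ℝ ((⊤:ℕ∞) : WithTop ℕ∞) g := by
    rw [contDiff_iff_contDiffAt]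
    intro ξ₀
    rcases lt_or_ge ‖ξ₀‖ (1/2) with h | h
    · have hmem : Metric.ball (0 : EuclideanSpace ℝ (Fin n)) (1/2) ∈ nhds ξ₀ :=
        Metric.isOpen_ball.mem_nhds (by simpa [Metric.mem_ball, dist_zero_right] using h)
      have hev : g =ᶠ[nhds ξ₀] (fun _ => (0:ℂ)) := by
        filter_upwards [hmem] with ξ hξ
        have : ‖ξ‖ < 1/2 := by simpa [Metric.mem_ball, dist_zero_right] using hξ
        simp [hgdef, hu_zero ξ this]
      exact (contDiffAt_const (c := (0:ℂ))).congr_of_eventuallyEq hev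
    · have hξ0 : ξ₀ ≠ 0 := by
        intro h0; rw [h0] at h; simp at h; linarith
      have hnorm : ContDiffAt ℝ ((⊤:ℕ∞) : WithTop ℕ∞)
          (fun ξ : EuclideanSpace ℝ (Fin n) => ‖ξ‖ ^ α) ξ₀ :=
        (contDiffAt_norm ℝ hξ0).rpow_const_of_ne (norm_ne_zero_iff.2 hξ0)
      have h1 : ContDiffAt ℝ ((⊤:ℕ∞) : WithTop ℕ∞)
          (fun ξ : EuclideanSpace ℝ (Fin n) => ((‖ξ‖ ^ α : ℝ) : ℂ)) ξ₀ :=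
        Complex.ofRealCLM.contDiff.contDiffAt.comp ξ₀ hnorm
      have h2 : ContDiffAt ℝ ((⊤:ℕ∞) : WithTop ℕ∞)
          (fun ξ : EuclideanSpace ℝ (Fin n) => Complex.I * ((ξ 0 : ℝ) : ℂ)) ξ₀ :=
        (contDiffAt_const.mul ((Complex.ofRealCLM.contDiff.comp hproj).contDiffAt))
      have h3 : ContDiffAt ℝ ((⊤:ℕ∞) : WithTop ℕ∞)
          (fun ξ : EuclideanSpace ℝ (Fin n) => ((u ξ : ℝ) : ℂ)) ξ₀ := by
        have hu_smooth : ContDiff ℝ ((⊤:ℕ∞) : WithTop ℕ∞) u :=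
          hχs'.sub (hχs'.comp (contDiff_id.const_smul (2:ℝ)))
        exact (Complex.ofRealCLM.contDiff.comp hu_smooth).contDiffAt
      exact ((h1.mul h2).mul h3)
  -- compact support of g
  have hg_supp : ∀ ξ : EuclideanSpace ℝ (Fin n), 2 < ‖ξ‖ → g ξ = 0 := by
    intro ξ hξ
    have h1 : χ ξ = 0 := hzero ξ hξ.le
    have h2 : χ ((2:ℝ) • ξ) = 0 := by
      apply hzero; rw [norm_smul]; simp only [Real.norm_ofNat]; nlinarith
    simp [hgdef, hu, h1, h2]
  have hgc : HasCompactSupport g := by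
    apply HasCompactSupport.intro (isCompact_closedBall (0 : EuclideanSpace ℝ (Fin n)) 2)
    intro ξ hξ
    simp only [Metric.mem_closedBall, dist_zero_right, not_le] at hξ
    exact hg_supp ξ hξ
  obtain ⟨G, hG⟩ := aux_toSchwartz g hg_smooth hgc
  set N : ℕ := n + 2 + ⌈α⌉₊ with hN
  obtain ⟨C1, hC1p, hC1⟩ := aux_ft_decay G N
  set K : EuclideanSpace ℝ (Fin n) → ℂ :=
    fun y => ∫ η, Complex.exp (Complex.I * ((inner ℝ y η : ℝ) : ℂ)) * g η with hK
  have hπ : (0:ℝ) < 2 * π := by positivity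
  have hKft : ∀ y, K y = 𝓕 g ((-(2*π)⁻¹) • y) := by
    intro y
    have hfun : (fun η : EuclideanSpace ℝ (Fin n) =>
        Complex.exp ((↑(-2 * π * ⟪η, (-(2*π)⁻¹) • y⟫) * Complex.I)) • g η)
        = (fun η => Complex.exp (Complex.I * ((⟪y, η⟫ : ℝ) : ℂ)) * g η) := by
      funext η
      have hinner : ⟪η, (-(2*π)⁻¹) • y⟫ = -(2*π)⁻¹ * ⟪η, y⟫ := real_inner_smul_right _ _ _
      have harg : -2 * π * ⟪η, (-(2*π)⁻¹) • y⟫ = ⟪y, η⟫ := by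
        rw [hinner, real_inner_comm]; field_simp
      rw [smul_eq_mul, harg, mul_comm ((inner ℝ y η : ℝ):ℂ) Complex.I]
    rw [Real.fourier_eq', hfun]
  have hKdecay : ∀ y, ‖K y‖ ≤ (C1 * (2*π) ^ N) * (1 + ‖y‖) ^ (-(N:ℝ)) := by
    intro y
    rw [hKft y, ← hG]
    have h1 := hC1 ((-(2*π)⁻¹) • y)
    have hnw : ‖(-(2*π)⁻¹) • y‖ = (2*π)⁻¹ * ‖y‖ := by
      rw [norm_smul, Real.norm_eq_abs, abs_neg, abs_of_pos (inv_pos.2 hπ)]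
    rw [hnw] at h1
    refine h1.trans ?_
    have hA : (0:ℝ) < 1 + (2*π)⁻¹ * ‖y‖ := by positivity
    have hB : (0:ℝ) < 1 + ‖y‖ := by positivity
    have hkey : (1 + (2*π)⁻¹ * ‖y‖) ^ (-(N:ℝ)) ≤ (2*π) ^ N * (1 + ‖y‖) ^ (-(N:ℝ)) := by
      have hle : (2*π)⁻¹ * (1 + ‖y‖) ≤ 1 + (2*π)⁻¹ * ‖y‖ := by
        have h2π : (1:ℝ) ≤ 2*π := by nlinarith [Real.pi_gt_three]
        have : (2*π)⁻¹ ≤ 1 := inv_le_one_of_one_le₀ h2π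
        have h0 : (0:ℝ) < (2*π)⁻¹ := inv_pos.2 hπ
        nlinarith [norm_nonneg y]
      calc (1 + (2*π)⁻¹ * ‖y‖) ^ (-(N:ℝ)) ≤ ((2*π)⁻¹ * (1 + ‖y‖)) ^ (-(N:ℝ)) :=
            rpow_le_rpow_of_nonpos (by positivity) hle (neg_nonpos.2 (Nat.cast_nonneg N))
        _ = ((2*π)⁻¹) ^ (-(N:ℝ)) * (1 + ‖y‖) ^ (-(N:ℝ)) :=
            Real.mul_rpow (by positivity) hB.le
        _ = (2*π) ^ N * (1 + ‖y‖) ^ (-(N:ℝ)) := by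
            rw [Real.inv_rpow hπ.le, ← Real.rpow_neg hπ.le, neg_neg, Real.rpow_natCast]
    calc C1 * (1 + (2*π)⁻¹ * ‖y‖) ^ (-(N:ℝ)) ≤ C1 * ((2*π) ^ N * (1 + ‖y‖) ^ (-(N:ℝ))) :=
          mul_le_mul_of_nonneg_left hkey hC1p.le
      _ = (C1 * (2*π) ^ N) * (1 + ‖y‖) ^ (-(N:ℝ)) := by ring
  set C2 : ℝ := C1 * (2*π) ^ N with hC2
  have hC2p : 0 < C2 := by positivity
  set sR : ℝ := (n:ℝ) + α + 1 with hsR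
  have hsR2 : 2 ≤ sR := by
    have : (1:ℝ) ≤ (n:ℝ) := by exact_mod_cast hn
    rw [hsR]; linarith
  have hsRN : sR + 1 ≤ (N:ℝ) := by
    have hceil : α ≤ (⌈α⌉₊ : ℝ) := Nat.le_ceil α
    rw [hsR, hN]; push_cast; linarith
  -- coordinate bound
  have hcoord : ∀ ξ : EuclideanSpace ℝ (Fin n), |ξ 0| ≤ ‖ξ‖ := by
    intro ξ
    rw [EuclideanSpace.norm_eq]
    rw [show |ξ 0| = Real.sqrt (‖ξ 0‖ ^ 2) from by rw [Real.sqrt_sq_eq_abs]; simp]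
    apply Real.sqrt_le_sqrt
    apply Finset.single_le_sum (f := fun i => ‖ξ i‖ ^ 2) (fun i _ => by positivity)
      (Finset.mem_univ 0)
  -- continuity facts
  have hsφ_cont : Continuous sφ := by
    apply Continuous.mul
    · exact Complex.continuous_ofReal.comp
        (continuous_norm.rpow_const (fun ξ => Or.inr hα.le))
    · exact continuous_const.mul
        (Complex.continuous_ofReal.comp (EuclideanSpace.proj (𝕜 := ℝ) (0 : Fin n)).continuous)
  have hV : (0:ℝ) ≤ (volume (Metric.closedBall (0:EuclideanSpace ℝ (Fin n)) 2)).toReal :=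
    ENNReal.toReal_nonneg
  set V : ℝ := (volume (Metric.closedBall (0:EuclideanSpace ℝ (Fin n)) 2)).toReal with hVdef
  set CR : ℝ := (2:ℝ) ^ α * 2 * V with hCR
  have hCRnn : 0 ≤ CR := by
    apply mul_nonneg (mul_nonneg (rpow_nonneg (by norm_num) α) (by norm_num)) hV
  set Cfin : ℝ := (2*π) ^ (-(n:ℝ)) * (C2 * ((4:ℝ) ^ ((N:ℝ) - sR) + 2)) with hCfin
  refine ⟨Cfin, by positivity, fun x => ?_⟩
  -- per x
  set m_int : EuclideanSpace ℝ (Fin n) → ℂ := fun ξ =>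
    Complex.exp (Complex.I * ((inner ℝ x ξ : ℝ) : ℂ)) *
      ((‖ξ‖ ^ α : ℝ) : ℂ) * (Complex.I * ((ξ 0 : ℝ) : ℂ)) * ((χ ξ : ℝ) : ℂ) with hm
  set Gj : ℕ → EuclideanSpace ℝ (Fin n) → ℂ := fun j ξ =>
    Complex.exp (Complex.I * ((inner ℝ x ξ : ℝ) : ℂ)) * sφ ξ *
      (((χ ((2:ℝ)^j • ξ) - χ ((2:ℝ)^(j+1) • ξ)) : ℝ) : ℂ) with hGj
  set RJ : ℕ → EuclideanSpace ℝ (Fin n) → ℂ := fun J ξ =>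
    Complex.exp (Complex.I * ((inner ℝ x ξ : ℝ) : ℂ)) * sφ ξ *
      ((χ ((2:ℝ)^J • ξ) : ℝ) : ℂ) with hRJ
  have hexp_cont : Continuous fun ξ : EuclideanSpace ℝ (Fin n) =>
      Complex.exp (Complex.I * ((inner ℝ x ξ : ℝ) : ℂ)) := by
    apply Complex.continuous_exp.comp
    exact continuous_const.mul
      (Complex.continuous_ofReal.comp (continuous_const.inner continuous_id))
  have hexp_norm : ∀ r : ℝ, ‖Complex.exp (Complex.I * (r : ℂ))‖ = 1 := fun r => by
    rw [mul_comm]; exact Complex.norm_exp_ofReal_mul_I r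
  have hχabs : ∀ ξ, |χ ξ| ≤ 1 := fun ξ => abs_le.2 ⟨by linarith [(h01 ξ).1], (h01 ξ).2⟩
  -- integrability
  have hGj_int : ∀ j : ℕ, Integrable (Gj j) := by
    intro j
    have hcont : Continuous (Gj j) := by
      apply (hexp_cont.mul hsφ_cont).mul
      exact Complex.continuous_ofReal.comp
        ((hχs.continuous.comp (continuous_const_smul ((2:ℝ)^j))).sub
          (hχs.continuous.comp (continuous_const_smul ((2:ℝ)^(j+1)))))
    apply hcont.integrable_of_hasCompactSupport
    apply HasCompactSupport.intro (isCompact_closedBall (0 : EuclideanSpace ℝ (Fin n)) 2)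
    intro ξ hξ
    simp only [Metric.mem_closedBall, dist_zero_right, not_le] at hξ
    have hz : ∀ k : ℕ, χ ((2:ℝ)^k • ξ) = 0 := fun k => by
      apply hzero
      rw [norm_smul, Real.norm_eq_abs, abs_of_pos (pow_pos two_pos k)]
      have h1 : (1:ℝ) ≤ (2:ℝ)^k := one_le_pow₀ one_le_two
      nlinarith
    simp [hGj, hz j, hz (j+1)]
  have hRJ_int : ∀ J : ℕ, Integrable (RJ J) := by
    intro J
    have hcont : Continuous (RJ J) := by
      apply (hexp_cont.mul hsφ_cont).mul
      exact Complex.continuous_ofReal.comp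
        (hχs.continuous.comp (continuous_const_smul ((2:ℝ)^J)))
    apply hcont.integrable_of_hasCompactSupport
    apply HasCompactSupport.intro (isCompact_closedBall (0 : EuclideanSpace ℝ (Fin n)) 2)
    intro ξ hξ
    simp only [Metric.mem_closedBall, dist_zero_right, not_le] at hξ
    have hz : χ ((2:ℝ)^J • ξ) = 0 := by
      apply hzero
      rw [norm_smul, Real.norm_eq_abs, abs_of_pos (pow_pos two_pos J)]
      have h1 : (1:ℝ) ≤ (2:ℝ)^J := one_le_pow₀ one_le_two
      nlinarith
    simp [hRJ, hz]
  -- change of variables: norm of each dyadic piece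
  have key : ∀ j : ℕ, ‖∫ ξ, Gj j ξ‖ ≤
      C2 * ((2:ℝ)^j) ^ (-sR) * (1 + ((2:ℝ)^j)⁻¹ * ‖x‖) ^ (-(N:ℝ)) := by
    intro j
    set R : ℝ := (2:ℝ)^j with hRdef
    have hRpos : (0:ℝ) < R := pow_pos two_pos j
    set F : EuclideanSpace ℝ (Fin n) → ℂ := fun η =>
      Complex.exp (Complex.I * ((inner ℝ (R⁻¹ • x) η : ℝ) : ℂ)) * g η with hF
    have hpt : ∀ ξ, F (R • ξ) = ((R^α * R : ℝ) : ℂ) * Gj j ξ := by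
      intro ξ
      have hinner : (inner ℝ (R⁻¹ • x) (R • ξ) : ℝ) = inner ℝ x ξ := by
        rw [real_inner_smul_left, real_inner_smul_right]
        field_simp
      have hnorm : ‖R • ξ‖ ^ α = R ^ α * ‖ξ‖ ^ α := by
        rw [norm_smul, Real.norm_eq_abs, abs_of_pos hRpos,
          Real.mul_rpow hRpos.le (norm_nonneg _)]
      have happ : (R • ξ) 0 = R * ξ 0 := rfl
      have hsmul2 : (2:ℝ) • (R • ξ) = (2:ℝ)^(j+1) • ξ := by
        rw [smul_smul]
        congr 1
        rw [hRdef]; ring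
      rw [hF, hGj]
      simp only
      rw [hinner, hgdef]
      simp only
      rw [hsφ]
      simp only
      rw [hnorm, happ, hu]
      simp only
      rw [hsmul2]
      push_cast
      ring
    have hchv := MeasureTheory.Measure.integral_comp_smul (μ := volume) F R
    have hfr : Module.finrank ℝ (EuclideanSpace ℝ (Fin n)) = n := finrank_euclideanSpace_fin
    rw [hfr] at hchv
    have h1 : ∫ ξ, F (R • ξ) = ((R^α * R : ℝ) : ℂ) * ∫ ξ, Gj j ξ := by
      rw [show (fun ξ => F (R • ξ)) = fun ξ => ((R^α * R : ℝ) : ℂ) * Gj j ξ from funext hpt]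
      exact integral_const_mul _ _
    have h2 : (∫ η, F η) = K (R⁻¹ • x) := by rw [hK]
    rw [h1, h2] at hchv
    have hnormeq := congrArg norm hchv
    rw [norm_mul, norm_smul] at hnormeq
    have hcast1 : ‖((R^α * R : ℝ) : ℂ)‖ = R^α * R := by
      rw [Complex.norm_real, Real.norm_eq_abs, abs_of_pos (by positivity)]
    have hcast2 : ‖|(R ^ n)⁻¹|‖ = (R ^ n)⁻¹ := by
      rw [Real.norm_eq_abs, abs_abs, abs_of_pos (by positivity)]
    rw [hcast1, hcast2] at hnormeq
    have hKb := hKdecay (R⁻¹ • x)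
    have hxnorm : ‖R⁻¹ • x‖ = R⁻¹ * ‖x‖ := by
      rw [norm_smul, Real.norm_eq_abs, abs_of_pos (by positivity)]
    rw [hxnorm] at hKb
    have hGnorm : ‖∫ ξ, Gj j ξ‖ = (R^α * R)⁻¹ * ((R ^ n)⁻¹ * ‖K (R⁻¹ • x)‖) := by
      have hne : (R^α * R) ≠ 0 := by positivity
      field_simp at hnormeq ⊢
      linarith [hnormeq]
    rw [hGnorm]
    have hfactor : (R^α * R)⁻¹ * (R ^ n)⁻¹ = R ^ (-sR) := by
      rw [hsR, show -((n:ℝ) + α + 1) = (-(n:ℝ) + -α) + (-1) from by ring,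
        Real.rpow_add hRpos, Real.rpow_add hRpos, Real.rpow_neg hRpos.le,
        Real.rpow_neg hRpos.le, Real.rpow_neg hRpos.le, Real.rpow_one,
        Real.rpow_natCast]
      rw [mul_inv]
      ring
    calc (R^α * R)⁻¹ * ((R ^ n)⁻¹ * ‖K (R⁻¹ • x)‖)
        ≤ (R^α * R)⁻¹ * ((R ^ n)⁻¹ * (C2 * (1 + R⁻¹ * ‖x‖) ^ (-(N:ℝ)))) := by
          apply mul_le_mul_of_nonneg_left _ (by positivity)
          exact mul_le_mul_of_nonneg_left hKb (by positivity)
      _ = C2 * R ^ (-sR) * (1 + R⁻¹ * ‖x‖) ^ (-(N:ℝ)) := by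
          rw [show (R^α * R)⁻¹ * ((R ^ n)⁻¹ * (C2 * (1 + R⁻¹ * ‖x‖) ^ (-(N:ℝ))))
            = ((R^α * R)⁻¹ * (R ^ n)⁻¹) * C2 * (1 + R⁻¹ * ‖x‖) ^ (-(N:ℝ)) from by ring,
            hfactor]
          ring
  -- telescoping decomposition
  have htel : ∀ J : ℕ, m_int = fun ξ => (∑ j ∈ Finset.range J, Gj j ξ) + RJ J ξ := by
    intro J
    funext ξ
    have hsum := Finset.sum_range_sub' (f := fun j => ((χ ((2:ℝ)^j • ξ) : ℝ) : ℂ)) J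
    have hsum2 : ∑ j ∈ Finset.range J, Gj j ξ
        = Complex.exp (Complex.I * ((inner ℝ x ξ : ℝ) : ℂ)) * sφ ξ *
          (((χ ξ : ℝ) : ℂ) - ((χ ((2:ℝ)^J • ξ) : ℝ) : ℂ)) := by
      rw [hGj]
      simp only
      rw [← Finset.mul_sum]
      congr 1
      push_cast
      rw [hsum, pow_zero, one_smul]
    rw [hsum2, hRJ, hm, hsφ]
    simp only
    ring
  have hint_eq : ∀ J : ℕ, (∫ ξ, m_int ξ)
      = (∑ j ∈ Finset.range J, ∫ ξ, Gj j ξ) + ∫ ξ, RJ J ξ := by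
    intro J
    rw [htel J]
    rw [integral_add (integrable_finset_sum _ (fun j _ => hGj_int j)) (hRJ_int J),
      integral_finset_sum _ (fun j _ => hGj_int j)]
  -- remainder bound
  have hrem : ∀ J : ℕ, ‖∫ ξ, RJ J ξ‖ ≤ CR * ((2:ℝ)^J)⁻¹ := by
    intro J
    set c : ℝ := ((2:ℝ)^J)⁻¹ with hc
    have hcpos : (0:ℝ) < c := by positivity
    have hcle1 : c ≤ 1 := inv_le_one_of_one_le₀ (one_le_pow₀ one_le_two)
    have hvan : ∀ ξ ∉ Metric.closedBall (0 : EuclideanSpace ℝ (Fin n)) (2*c), RJ J ξ = 0 := by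
      intro ξ hξ
      simp only [Metric.mem_closedBall, dist_zero_right, not_le] at hξ
      have hz : χ ((2:ℝ)^J • ξ) = 0 := by
        apply hzero
        rw [norm_smul, Real.norm_eq_abs, abs_of_pos (pow_pos two_pos J)]
        have h2 : (2:ℝ)^J * c = 1 := by rw [hc]; field_simp
        have hp : (0:ℝ) < (2:ℝ)^J := pow_pos two_pos J
        have h3 : (2:ℝ)^J * (2 * c) ≤ (2:ℝ)^J * ‖ξ‖ :=
          mul_le_mul_of_nonneg_left hξ.le hp.le
        nlinarith
      simp [hRJ, hz]
    have hball_bound : ∀ ξ ∈ Metric.closedBall (0 : EuclideanSpace ℝ (Fin n)) (2*c),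
        ‖RJ J ξ‖ ≤ (2*c) ^ α * (2*c) := by
      intro ξ hξ
      simp only [Metric.mem_closedBall, dist_zero_right] at hξ
      rw [hRJ]
      simp only
      rw [norm_mul, norm_mul, hexp_norm, one_mul, hsφ]
      simp only
      rw [norm_mul, norm_mul, Complex.norm_I, one_mul, Complex.norm_real,
        Complex.norm_real, Complex.norm_real]
      have h1 : ‖‖ξ‖ ^ α‖ ≤ (2*c) ^ α := by
        rw [Real.norm_eq_abs, abs_of_nonneg (rpow_nonneg (norm_nonneg _) _)]
        exact rpow_le_rpow (norm_nonneg _) hξ hα.le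
      have h2 : ‖ξ 0‖ ≤ 2*c := (hcoord ξ).trans hξ
      have h3 : ‖χ ((2:ℝ)^J • ξ)‖ ≤ 1 := hχabs _
      calc ‖‖ξ‖ ^ α‖ * ‖ξ 0‖ * ‖χ ((2:ℝ)^J • ξ)‖ ≤ (2*c) ^ α * (2*c) * 1 := by
            apply mul_le_mul (mul_le_mul h1 h2 (norm_nonneg _)
              (rpow_nonneg (by positivity) _)) h3 (norm_nonneg _) (by positivity)
        _ = (2*c) ^ α * (2*c) := mul_one _
    rw [← setIntegral_eq_integral_of_forall_compl_eq_zero hvan]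
    have hmeas : volume (Metric.closedBall (0 : EuclideanSpace ℝ (Fin n)) (2*c)) < ⊤ :=
      measure_closedBall_lt_top
    have hRJcont : Continuous (RJ J) := by
      apply (hexp_cont.mul hsφ_cont).mul
      exact Complex.continuous_ofReal.comp
        (hχs.continuous.comp (continuous_const_smul ((2:ℝ)^J)))
    have hnse := norm_setIntegral_le_of_norm_le_const (f := RJ J) hmeas hball_bound
    refine hnse.trans ?_
    have hsub : Metric.closedBall (0 : EuclideanSpace ℝ (Fin n)) (2*c)
        ⊆ Metric.closedBall 0 2 := Metric.closedBall_subset_closedBall (by nlinarith)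
    have hvol : (volume (Metric.closedBall (0 : EuclideanSpace ℝ (Fin n)) (2*c))).toReal
        ≤ V := by
      rw [hVdef]
      exact ENNReal.toReal_mono (measure_closedBall_lt_top).ne (measure_mono hsub)
    have hc_rpow : (2*c) ^ α ≤ 2 ^ α := by
      calc (2*c) ^ α ≤ (2*1 : ℝ) ^ α := by
            apply rpow_le_rpow (by positivity) (by linarith) hα.le
        _ = 2 ^ α := by norm_num
    have hvol_nonneg : (0:ℝ) ≤ (volume (Metric.closedBall
        (0 : EuclideanSpace ℝ (Fin n)) (2*c))).toReal := ENNReal.toReal_nonneg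
    calc (2*c) ^ α * (2*c) * (volume (Metric.closedBall
          (0 : EuclideanSpace ℝ (Fin n)) (2*c))).toReal
        ≤ 2 ^ α * (2*c) * V := by
          apply mul_le_mul (mul_le_mul hc_rpow le_rfl (by positivity)
            (rpow_nonneg (by norm_num) _)) hvol hvol_nonneg (by positivity)
      _ = CR * c := by rw [hCR]; ring
  -- assemble
  have hxnn : (0:ℝ) ≤ ‖x‖ := norm_nonneg x
  set B : ℝ := C2 * ((4:ℝ) ^ ((N:ℝ) - sR) + 2) * (1 + ‖x‖) ^ (-sR) with hB
  have hbound : ∀ J : ℕ, ‖∫ ξ, m_int ξ‖ ≤ B + CR * ((2:ℝ)^J)⁻¹ := by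
    intro J
    rw [hint_eq J]
    apply (norm_add_le _ _).trans
    apply add_le_add _ (hrem J)
    apply (norm_sum_le _ _).trans
    have hsum_le : ∑ j ∈ Finset.range J, ‖∫ ξ, Gj j ξ‖
        ≤ ∑ j ∈ Finset.range J, C2 * ((2:ℝ)^j) ^ (-sR) * (1 + ((2:ℝ)^j)⁻¹ * ‖x‖) ^ (-(N:ℝ)) :=
      Finset.sum_le_sum (fun j _ => key j)
    refine hsum_le.trans ?_
    rw [hB]
    exact aux_dyadic_sum sR (N:ℝ) hsR2 hsRN C2 hC2p.le ‖x‖ hxnn J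
  have htendc : Filter.Tendsto (fun J : ℕ => CR * ((2:ℝ)^J)⁻¹) Filter.atTop (nhds 0) := by
    have h1 : (fun J : ℕ => ((2:ℝ)^J)⁻¹) = fun J : ℕ => ((2:ℝ)⁻¹)^J := by
      funext J; rw [inv_pow]
    have h2 : Filter.Tendsto (fun J : ℕ => ((2:ℝ)^J)⁻¹) Filter.atTop (nhds 0) := by
      rw [h1]
      exact tendsto_pow_atTop_nhds_zero_of_lt_one (by norm_num) (by norm_num)
    have := h2.const_mul CR
    simpa using this
  have hnorm_le : ‖∫ ξ, m_int ξ‖ ≤ B := by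
    have htendB : Filter.Tendsto (fun J : ℕ => B + CR * ((2:ℝ)^J)⁻¹)
        Filter.atTop (nhds (B + 0)) := Filter.Tendsto.const_add B htendc
    rw [add_zero] at htendB
    exact ge_of_tendsto htendB (Filter.Eventually.of_forall hbound)
  -- final computation
  rw [norm_mul]
  have hcoef : ‖(((2 * π) ^ (-(n : ℝ)) : ℝ) : ℂ)‖ = (2*π) ^ (-(n:ℝ)) := by
    rw [Complex.norm_real, Real.norm_eq_abs, abs_of_pos (rpow_pos_of_pos hπ _)]
  rw [hcoef]
  have hsqrt_pos : (0:ℝ) < Real.sqrt (1 + ‖x‖ ^ 2) := Real.sqrt_pos.2 (by positivity)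
  have hsqrt_le : Real.sqrt (1 + ‖x‖ ^ 2) ≤ 1 + ‖x‖ := by
    rw [show (1:ℝ) + ‖x‖ = Real.sqrt ((1 + ‖x‖)^2) from (Real.sqrt_sq (by positivity)).symm]
    apply Real.sqrt_le_sqrt
    nlinarith
  have hrpow_le : (1 + ‖x‖) ^ (-sR) ≤ Real.sqrt (1 + ‖x‖ ^ 2) ^ (-sR) :=
    rpow_le_rpow_of_nonpos hsqrt_pos hsqrt_le (neg_nonpos.2 (by rw [hsR]; positivity))
  calc (2*π) ^ (-(n:ℝ)) * ‖∫ ξ, m_int ξ‖ ≤ (2*π) ^ (-(n:ℝ)) * B :=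
        mul_le_mul_of_nonneg_left hnorm_le (rpow_pos_of_pos hπ _).le
    _ = (2*π) ^ (-(n:ℝ)) * (C2 * ((4:ℝ) ^ ((N:ℝ) - sR) + 2)) * (1 + ‖x‖) ^ (-sR) := by
        rw [hB]; ring
    _ ≤ Cfin * Real.sqrt (1 + ‖x‖ ^ 2) ^ (-sR) := by
        rw [hCfin]
        apply mul_le_mul_of_nonneg_left hrpow_le (by positivity)
    _ = Cfin * Real.sqrt (1 + ‖x‖ ^ 2) ^ (-((n:ℝ) + α + 1)) := by rw [hsR]
end
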